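/- Let G = K_1 ∨ (C_{k_1} ∪ ⋯ ∪ C_{k_t} ∪ qK_2 ∪ sK_1) and G' = K_1 ∨ (C_{k'_1} ∪ ⋯ ∪ C_{k'_z} ∪ qK_2 ∪ sK_1) with t, z, q, s ≥ 1, k_i ≥ 3 for 1 ≤ i ≤ t and k'_j ≥ 3 for 1 ≤ j ≤ z. If G and G' have the same order n, then χ_1(G) = χ_1(G'); moreover, this common value is the largest root of p_{n,q,s}(ρ) = ρ^4 − (n+8)ρ^3 + (8n+15)ρ^2 + (4q+4s−19n+4)ρ + (12n−4q−12s−12). In other words, for fixed order n, the largest signless Laplacian eigenvalue of such a cone depends only on q and s, and not on the number or lengths of the cycles. -/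

import Mathlib

open SimpleGraph Finset

namespace Paper

/-- The cone `K₁ ∨ G`: a new apex vertex (`none`) joined to every vertex of `G`. -/
def cone {V : Type*} (G : SimpleGraph V) : SimpleGraph (Option V) where
  Adj x y :=
    match x, y with
    | none, none => False
    | none, some _ => True
    | some _, none => True
    | some a, some b => G.Adj a b
  symm := by
    constructor
    rintro (_ | a) (_ | b) h
    · exact h
    · exact trivial
    · exact trivial
    · exact G.adj_symm h
  loopless := by
    constructor
    rintro (_ | a) h
    · exact h
    · exact G.irrefl h

/-- Disjoint union of an indexed family of graphs. -/
def sigmaGraph {ι : Type*} {V : ι → Type*} (G : ∀ i, SimpleGraph (V i)) :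
    SimpleGraph (Σ i, V i) where
  Adj x y := ∃ (i : ι) (u v : V i), x = ⟨i, u⟩ ∧ y = ⟨i, v⟩ ∧ (G i).Adj u v
  symm := by
    constructor
    rintro x y ⟨i, u, v, rfl, rfl, h⟩
    exact ⟨i, v, u, rfl, rfl, (G i).adj_symm h⟩
  loopless := by
    constructor
    rintro x ⟨i, u, v, rfl, h2, h⟩
    injection h2 with h3 h4
    subst h4
    exact (G i).irrefl h

/-- `q` disjoint copies of `K₂`. -/
def K2s (q : ℕ) : SimpleGraph (Σ _ : Fin q, Fin 2) :=
  sigmaGraph fun _ => (⊤ : SimpleGraph (Fin 2))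

/-- The signless Laplacian matrix `Q(G) = D(G) + A(G)`. -/
noncomputable def QMatrix {V : Type*} [Fintype V] (G : SimpleGraph V) : Matrix V V ℝ :=
  letI := Classical.decEq V
  letI := Classical.decRel G.Adj
  Matrix.diagonal (fun v => (G.degree v : ℝ)) + G.adjMatrix ℝ

/-- The signless Laplacian spectrum, as the multiset of roots of the characteristic
polynomial of `Q(G)` (with multiplicity). -/
noncomputable def Qspectrum {V : Type*} [Fintype V] (G : SimpleGraph V) : Multiset ℝ :=
  letI := Classical.decEq V
  (QMatrix G).charpoly.roots

/-- Multiplicity of `ρ` as a signless Laplacian eigenvalue of `G`. -/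
noncomputable def Qmult {V : Type*} [Fintype V] (G : SimpleGraph V) (ρ : ℝ) : ℕ :=
  (Qspectrum G).count ρ

/-- The `i`-th largest signless Laplacian eigenvalue (1-indexed), i.e. `χ_i(G)`. -/
noncomputable def Qeig {V : Type*} [Fintype V] (G : SimpleGraph V) (i : ℕ) : ℝ :=
  (((Qspectrum G).sort (· ≤ ·)).reverse).getD (i - 1) 0

/-- `G` is determined by its signless Laplacian spectrum. -/
def IsDQS {V : Type*} [Fintype V] (G : SimpleGraph V) : Prop :=
  ∀ (W : Type) [Fintype W] (F : SimpleGraph W),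
    Qspectrum F = Qspectrum G → Nonempty (F ≃g G)

/-- The number of subgraphs of `G` isomorphic to `H`. -/
noncomputable def subgraphCount {V W : Type*} (G : SimpleGraph V) (H : SimpleGraph W) : ℕ :=
  Nat.card {H' : G.Subgraph // Nonempty (H'.coe ≃g H)}

/-- The number of triangle subgraphs of `G` containing a vertex `v`. -/
noncomputable def triangleCountAt {V : Type*} (G : SimpleGraph V) (v : V) : ℕ :=
  Nat.card {H' : G.Subgraph //
    v ∈ H'.verts ∧ Nonempty (H'.coe ≃g (⊤ : SimpleGraph (Fin 3)))}

/-- Vertex degree (with classical decidability). -/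
noncomputable def deg {V : Type*} [Fintype V] (G : SimpleGraph V) (v : V) : ℕ :=
  letI := Classical.decRel G.Adj
  G.degree v

/-- The multiset of vertex degrees of `G`. -/
noncomputable def degreeMultiset {V : Type*} [Fintype V] (G : SimpleGraph V) : Multiset ℕ :=
  (Finset.univ : Finset V).val.map fun v => deg G v

/-- The maximum vertex degree of `G`. -/
noncomputable def maxDeg {V : Type*} [Fintype V] (G : SimpleGraph V) : ℕ :=
  letI := Classical.decRel G.Adj
  G.maxDegree

/-- `S_r(G) = trace(A(G)^r)`, the `r`-th spectral moment. -/
noncomputable def Smoment {V : Type*} [Fintype V] (G : SimpleGraph V) (r : ℕ) : ℝ :=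
  letI := Classical.decEq V
  letI := Classical.decRel G.Adj
  ((G.adjMatrix ℝ) ^ r).trace

/-- `T_r(G) = trace(Q(G)^r)`, the `r`-th signless Laplacian spectral moment. -/
noncomputable def Tmoment {V : Type*} [Fintype V] (G : SimpleGraph V) (r : ℕ) : ℝ :=
  letI := Classical.decEq V
  ((QMatrix G) ^ r).trace

/-- `∑_{uv ∈ E(G)} d_G(u) d_G(v)`. -/
noncomputable def edgeDegSum {V : Type*} [Fintype V] (G : SimpleGraph V) : ℕ :=
  letI := Classical.decEq V
  letI := Classical.decRel G.Adj
  ∑ e ∈ G.edgeFinset,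
    Sym2.lift ⟨fun u v => G.degree u * G.degree v, fun _ _ => Nat.mul_comm _ _⟩ e

/-- The coalescence of `G` at `v` with the apex of `K₁ ∨ r K₂`: add `2r` new vertices
`a_i, b_i` and edges `a_i b_i`, `v a_i`, `v b_i`. -/
def coalescenceK2s {V : Type*} (G : SimpleGraph V) (v : V) (r : ℕ) :
    SimpleGraph (V ⊕ (Fin r × Fin 2)) where
  Adj x y :=
    match x, y with
    | Sum.inl a, Sum.inl b => G.Adj a b
    | Sum.inl a, Sum.inr _ => a = v
    | Sum.inr _, Sum.inl b => b = v
    | Sum.inr p, Sum.inr p' => p.1 = p'.1 ∧ p.2 ≠ p'.2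
  symm := by
    constructor
    rintro (a | p) (b | p') h
    · exact G.adj_symm h
    · exact h
    · exact h
    · exact ⟨h.1.symm, h.2.symm⟩
  loopless := by
    constructor
    rintro (a | p) h
    · exact G.irrefl h
    · exact h.2 rfl


/-- `K₁ ∨ (C_{k 0} ∪ ⋯ ∪ C_{k (t-1)} ∪ q K₂ ∪ s K₁)`. -/
def coneCycles {t : ℕ} (k : Fin t → ℕ) (q s : ℕ) :
    SimpleGraph (Option ((Σ i, Fin (k i)) ⊕ ((Σ _ : Fin q, Fin 2) ⊕ Fin s))) :=
  cone ((sigmaGraph fun i => cycleGraph (k i)) ⊕g (K2s q ⊕g (⊥ : SimpleGraph (Fin s))))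

/-- `K₁ ∨ (C_k ∪ q K₂ ∪ s K₁)`. -/
def coneOneCycle (k q s : ℕ) :
    SimpleGraph (Option (Fin k ⊕ ((Σ _ : Fin q, Fin 2) ⊕ Fin s))) :=
  cone (cycleGraph k ⊕g (K2s q ⊕g (⊥ : SimpleGraph (Fin s))))

/-- `K₁ ∨ (C₄ ∪ P_{k-3} ∪ P₃ ∪ (q-2) K₂ ∪ s K₁)`. -/
def coneAlt (k q s : ℕ) :
    SimpleGraph (Option (Fin 4 ⊕ (Fin (k - 3) ⊕ (Fin 3 ⊕ ((Σ _ : Fin (q - 2), Fin 2) ⊕ Fin s))))) :=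
  cone (cycleGraph 4 ⊕g (pathGraph (k - 3) ⊕g (pathGraph 3 ⊕g
    (K2s (q - 2) ⊕g (⊥ : SimpleGraph (Fin s))))))

/-- `K₁ ∨ (C₃ ∪ C_{k 0} ∪ ⋯ ∪ C_{k (t'-1)} ∪ q K₂ ∪ s K₁)`. -/
def coneC3Cycles {t' : ℕ} (k : Fin t' → ℕ) (q s : ℕ) :
    SimpleGraph (Option (Fin 3 ⊕ ((Σ i, Fin (k i)) ⊕ ((Σ _ : Fin q, Fin 2) ⊕ Fin s)))) :=
  cone (cycleGraph 3 ⊕g ((sigmaGraph fun i => cycleGraph (k i)) ⊕g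
    (K2s q ⊕g (⊥ : SimpleGraph (Fin s)))))

/-- `K₁ ∨ (K_{1,3} ∪ C_{k 0} ∪ ⋯ ∪ C_{k (t'-1)} ∪ q K₂ ∪ s' K₁)`. -/
def coneStar {t' : ℕ} (k : Fin t' → ℕ) (q s' : ℕ) :
    SimpleGraph (Option ((Fin 1 ⊕ Fin 3) ⊕ ((Σ i, Fin (k i)) ⊕ ((Σ _ : Fin q, Fin 2) ⊕ Fin s')))) :=
  cone (completeBipartiteGraph (Fin 1) (Fin 3) ⊕g ((sigmaGraph fun i => cycleGraph (k i)) ⊕g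
    (K2s q ⊕g (⊥ : SimpleGraph (Fin s')))))

/-- `K₁ ∨ (P_{l 0} ∪ ⋯ ∪ P_{l (q-1)} ∪ s K₁)`. -/
def conePaths {q : ℕ} (l : Fin q → ℕ) (s : ℕ) :
    SimpleGraph (Option ((Σ i, Fin (l i)) ⊕ Fin s)) :=
  cone ((sigmaGraph fun i => pathGraph (l i)) ⊕g (⊥ : SimpleGraph (Fin s)))

/-- `K₁ ∨ (C_{k 0} ∪ ⋯ ∪ C_{k (z-1)} ∪ P_{l 0} ∪ ⋯ ∪ P_{l (q-1)} ∪ s K₁)`. -/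
def coneCyclesPaths {z q : ℕ} (k : Fin z → ℕ) (l : Fin q → ℕ) (s : ℕ) :
    SimpleGraph (Option ((Σ i, Fin (k i)) ⊕ ((Σ i, Fin (l i)) ⊕ Fin s))) :=
  cone ((sigmaGraph fun i => cycleGraph (k i)) ⊕g
    ((sigmaGraph fun i => pathGraph (l i)) ⊕g (⊥ : SimpleGraph (Fin s))))

/-- The quartic polynomial `p_{n,q,s}` from the paper. -/
noncomputable def quartic (n q s : ℕ) (x : ℝ) : ℝ :=
  x ^ 4 - ((n : ℝ) + 8) * x ^ 3 + (8 * (n : ℝ) + 15) * x ^ 2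
    + (4 * (q : ℝ) + 4 * (s : ℝ) - 19 * (n : ℝ) + 4) * x
    + (12 * (n : ℝ) - 4 * (q : ℝ) - 12 * (s : ℝ) - 12)

/-- The multiset `{3 + 2 cos (2jπ/k_i) : 1 ≤ j ≤ k_i - 1, 1 ≤ i ≤ t}`. -/
noncomputable def cycleEigs {t : ℕ} (k : Fin t → ℕ) : Multiset ℝ :=
  ∑ i : Fin t, (Multiset.range (k i - 1)).map
    (fun j => 3 + 2 * Real.cos (2 * ((j : ℝ) + 1) * Real.pi / (k i : ℝ)))

/-!
On the cone `K₁ ∨ (C_{k_1} ∪ ⋯ ∪ C_{k_t} ∪ qK₂ ∪ sK₁)` the partition into apex, cycle vertices,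
`K₂` vertices and isolated vertices is equitable, with quotient matrix
`[[n-1, K, 2q, s], [1, 5, 0, 0], [1, 0, 3, 0], [1, 0, 0, 1]]`, where `K = n - 1 - 2q - s` is the
total length of the cycles; its characteristic polynomial is `p_{n,q,s}`. Hence for every root
`θ > 5` of `p_{n,q,s}` the vector equal to `1` on the apex and to `(θ-5)⁻¹`, `(θ-3)⁻¹`, `(θ-1)⁻¹`
on the three classes is a positive eigenvector of `Q` for `θ`. A positive eigenvector of a
nonnegative matrix belongs to its largest eigenvalue, so `χ₁` equals every root of `p_{n,q,s}`
above `5`, and such a root exists because `p_{n,q,s}(5) = -8K < 0`.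
-/

end Paper

open Matrix

theorem Matrix.abs_le_of_pos_eigenvector {𝕜 ι : Type*} [Field 𝕜] [LinearOrder 𝕜]
    [IsStrictOrderedRing 𝕜] [Fintype ι] {M : Matrix ι ι 𝕜} (hM : ∀ i j, 0 ≤ M i j)
    {u v : ι → 𝕜} {θ μ : 𝕜} (hu : ∀ i, 0 < u i) (huθ : M *ᵥ u = θ • u)
    (hv : v ≠ 0) (hvμ : M *ᵥ v = μ • v) : |μ| ≤ θ := by
  obtain ⟨j, hj⟩ := Function.ne_iff.mp hv
  obtain ⟨i, -, hi⟩ := exists_max_image univ (fun l => |v l| / u l) ⟨j, mem_univ j⟩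
  set r := |v i| / u i
  have hvr : ∀ l, |v l| ≤ r * u l := fun l =>
    (div_le_iff₀ (hu l)).mp (hi l (mem_univ l))
  have hvi : 0 < |v i| := by
    have : 0 < |v j| / u j := div_pos (abs_pos.mpr hj) (hu j)
    exact (div_pos_iff_of_pos_right (hu i)).mp (this.trans_le (hi j (mem_univ j)))
  have key : |μ| * |v i| ≤ θ * |v i| := calc
    |μ| * |v i| = |∑ l, M i l * v l| := by
      rw [← abs_mul, ← smul_eq_mul, ← Pi.smul_apply, ← hvμ]; rfl
    _ ≤ ∑ l, M i l * |v l| := by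
      refine (abs_sum_le_sum_abs _ _).trans_eq (sum_congr rfl fun l _ => ?_)
      rw [abs_mul, abs_of_nonneg (hM i l)]
    _ ≤ ∑ l, M i l * (r * u l) :=
      sum_le_sum fun l _ => mul_le_mul_of_nonneg_left (hvr l) (hM i l)
    _ = r * (M *ᵥ u) i := by
      simp only [mulVec, dotProduct, mul_sum]
      exact sum_congr rfl fun l _ => by ring
    _ = θ * |v i| := by
      rw [huθ, Pi.smul_apply, smul_eq_mul, mul_left_comm, div_mul_cancel₀ _ (hu i).ne']
  exact le_of_mul_le_mul_right key hvi

theorem Matrix.mem_roots_charpoly_iff {𝕜 ι : Type*} [Field 𝕜] [Fintype ι] [DecidableEq ι]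
    (M : Matrix ι ι 𝕜) (x : 𝕜) :
    x ∈ M.charpoly.roots ↔ ∃ v ≠ 0, M *ᵥ v = x • v := by
  rw [Polynomial.mem_roots M.charpoly_monic.ne_zero, Polynomial.IsRoot.def, eval_charpoly,
    ← exists_mulVec_eq_zero_iff]
  simp only [sub_mulVec, scalar_apply, ← smul_one_eq_diagonal, smul_mulVec, one_mulVec,
    sub_eq_zero, eq_comm (a := M *ᵥ _)]

theorem Multiset.getD_reverse_sort_zero {α : Type*} [LinearOrder α] (s : Multiset α) {x : α}
    (d : α) (hx : x ∈ s) (hmax : ∀ y ∈ s, y ≤ x) :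
    ((s.sort (· ≤ ·)).reverse).getD 0 d = x := by
  have hsorted : ((s.sort (· ≤ ·)).reverse).Pairwise (· ≥ ·) :=
    List.pairwise_reverse.mpr (s.pairwise_sort _)
  have hmem : ∀ y, y ∈ (s.sort (· ≤ ·)).reverse ↔ y ∈ s := by simp
  generalize (s.sort (· ≤ ·)).reverse = l at hsorted hmem
  cases l with
  | nil => simp [← hmem] at hx
  | cons y l =>
    have hy : y ∈ s := (hmem y).mp List.mem_cons_self
    rcases List.mem_cons.mp ((hmem x).mpr hx) with rfl | hxl
    · rfl
    · exact le_antisymm (hmax y hy) (List.rel_of_pairwise_cons hsorted hxl)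

namespace Paper

@[simp] theorem cone_adj_none_some {V : Type*} (G : SimpleGraph V) (v : V) :
    (cone G).Adj none (some v) := trivial

@[simp] theorem cone_adj_some_none {V : Type*} (G : SimpleGraph V) (v : V) :
    (cone G).Adj (some v) none := trivial

@[simp] theorem cone_adj_some_some {V : Type*} (G : SimpleGraph V) (v w : V) :
    (cone G).Adj (some v) (some w) ↔ G.Adj v w := Iff.rfl

section QMatrix

variable {V : Type*} [Fintype V]

theorem QMatrix_eq (G : SimpleGraph V) [DecidableEq V] [DecidableRel G.Adj] :
    QMatrix G = diagonal (fun v => (G.degree v : ℝ)) + G.adjMatrix ℝ := by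
  unfold QMatrix
  congr!

theorem QMatrix_nonneg (G : SimpleGraph V) (i j : V) : 0 ≤ QMatrix G i j := by
  classical
  rw [QMatrix_eq, Matrix.add_apply, diagonal_apply, adjMatrix_apply]
  positivity

theorem QMatrix_mulVec_apply (G : SimpleGraph V) [DecidableRel G.Adj] (u : V → ℝ) (x : V) :
    (QMatrix G *ᵥ u) x = ∑ y, if G.Adj x y then u x + u y else 0 := by
  classical
  rw [QMatrix_eq, add_mulVec, Pi.add_apply, mulVec_diagonal, adjMatrix_mulVec_apply,
    ← sum_filter, ← neighborFinset_eq_filter, sum_add_distrib, sum_const,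
    card_neighborFinset_eq_degree, nsmul_eq_mul]

theorem mem_Qspectrum_iff (G : SimpleGraph V) (x : ℝ) :
    x ∈ Qspectrum G ↔ ∃ v ≠ 0, QMatrix G *ᵥ v = x • v := by
  let _ := Classical.decEq V
  exact mem_roots_charpoly_iff _ x

theorem Qeig_one_eq_of_pos_eigenvector [Nonempty V] (G : SimpleGraph V) {u : V → ℝ} {θ : ℝ}
    (hu : ∀ v, 0 < u v) (h : QMatrix G *ᵥ u = θ • u) : Qeig G 1 = θ := by
  have hu0 : u ≠ 0 := fun h0 => (hu (Classical.arbitrary V)).ne' (congrFun h0 _)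
  refine (Qspectrum G).getD_reverse_sort_zero 0 ((mem_Qspectrum_iff G θ).mpr ⟨u, hu0, h⟩) ?_
  intro y hy
  obtain ⟨v, hv, hvy⟩ := (mem_Qspectrum_iff G y).mp hy
  exact (le_abs_self y).trans (abs_le_of_pos_eigenvector (QMatrix_nonneg G) hu h hv hvy)

theorem QMatrix_mulVec_const_of_isRegularOfDegree (G : SimpleGraph V) [DecidableRel G.Adj]
    {r : ℕ} (hG : G.IsRegularOfDegree r) (β : ℝ) :
    QMatrix G *ᵥ (fun _ => β) = fun _ => 2 * r * β := by
  classical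
  ext x
  rw [QMatrix_mulVec_apply, ← sum_filter, ← neighborFinset_eq_filter, sum_const,
    card_neighborFinset_eq_degree, hG.degree_eq, nsmul_eq_mul]
  ring

theorem QMatrix_cone_mulVec (G : SimpleGraph V) (a : ℝ) (w : V → ℝ) :
    QMatrix (cone G) *ᵥ Option.elim' a w =
      Option.elim' (Fintype.card V * a + ∑ v, w v) (fun v => (QMatrix G *ᵥ w) v + w v + a) := by
  classical
  ext (_ | v)
  · simp [QMatrix_mulVec_apply, Fintype.sum_option, sum_add_distrib]
  · simp only [QMatrix_mulVec_apply, Fintype.sum_option, Option.elim'_none, Option.elim'_some,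
      cone_adj_some_none, cone_adj_some_some, if_true]
    ring

theorem QMatrix_sum_mulVec {W : Type*} [Fintype W] (G : SimpleGraph V) (H : SimpleGraph W)
    (f : V → ℝ) (g : W → ℝ) :
    QMatrix (G ⊕g H) *ᵥ Sum.elim f g = Sum.elim (QMatrix G *ᵥ f) (QMatrix H *ᵥ g) := by
  classical
  ext (v | w) <;> simp [QMatrix_mulVec_apply, Fintype.sum_sum_type]

theorem sigmaGraph_adj_mk {ι : Type*} {W : ι → Type*} (G : ∀ i, SimpleGraph (W i)) {i j : ι}
    (v : W i) (w : W j) :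
    (sigmaGraph G).Adj ⟨i, v⟩ ⟨j, w⟩ ↔ ∃ h : i = j, (G j).Adj (h ▸ v) w := by
  constructor
  · rintro ⟨l, x, y, h1, h2, hadj⟩
    obtain ⟨rfl, hx⟩ := Sigma.mk.inj_iff.mp h1
    obtain ⟨rfl, hy⟩ := Sigma.mk.inj_iff.mp h2
    exact ⟨rfl, by rwa [eq_of_heq hx, eq_of_heq hy]⟩
  · rintro ⟨rfl, h⟩
    exact ⟨i, v, w, rfl, rfl, h⟩

theorem QMatrix_sigmaGraph_mulVec {ι : Type*} [Fintype ι] {W : ι → Type*} [∀ i, Fintype (W i)]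
    (G : ∀ i, SimpleGraph (W i)) (f : (Σ i, W i) → ℝ) :
    QMatrix (sigmaGraph G) *ᵥ f = fun x => (QMatrix (G x.1) *ᵥ fun v => f ⟨x.1, v⟩) x.2 := by
  classical
  ext ⟨i, v⟩
  rw [QMatrix_mulVec_apply, QMatrix_mulVec_apply, ← univ_sigma_univ, sum_sigma,
    sum_eq_single i]
  · simp [sigmaGraph_adj_mk]
  · intro j _ hji
    simp [sigmaGraph_adj_mk, Ne.symm hji]
  · simp

end QMatrix

theorem cycleGraph_isRegularOfDegree_two {m : ℕ} (hm : 3 ≤ m) :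
    (cycleGraph m).IsRegularOfDegree 2 := by
  obtain ⟨m, rfl⟩ := Nat.exists_eq_add_of_le' hm
  exact fun _ => cycleGraph_degree_three_le

theorem QMatrix_coneCycles_mulVec {t : ℕ} {k : Fin t → ℕ} (hk : ∀ i, 3 ≤ k i) (q s : ℕ)
    (a b c d : ℝ) :
    QMatrix (coneCycles k q s) *ᵥ
        Option.elim' a (Sum.elim (fun _ => b) (Sum.elim (fun _ => c) fun _ => d)) =
      Option.elim' (((∑ i, k i : ℕ) + 2 * q + s) * a + (∑ i, k i : ℕ) * b + 2 * q * c + s * d)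
        (Sum.elim (fun _ => a + 5 * b) (Sum.elim (fun _ => a + 3 * c) fun _ => a + d)) := by
  have hK2 : (⊤ : SimpleGraph (Fin 2)).IsRegularOfDegree 1 := IsRegularOfDegree.top
  rw [coneCycles, QMatrix_cone_mulVec, QMatrix_sum_mulVec, QMatrix_sum_mulVec, K2s,
    QMatrix_mulVec_const_of_isRegularOfDegree _ IsRegularOfDegree.bot]
  ext (_ | ⟨i, v⟩ | ⟨j, e⟩ | v)
  · simp only [Option.elim'_none, Fintype.sum_sum_type, Sum.elim_inl, Sum.elim_inr, sum_const,
      card_univ, Fintype.card_sum, Fintype.card_sigma, Fintype.card_fin, nsmul_eq_mul]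
    push_cast
    ring
  · simp only [Option.elim'_some, Sum.elim_inl, QMatrix_sigmaGraph_mulVec,
      QMatrix_mulVec_const_of_isRegularOfDegree _ (cycleGraph_isRegularOfDegree_two (hk i))]
    ring
  · simp only [Option.elim'_some, Sum.elim_inl, Sum.elim_inr, QMatrix_sigmaGraph_mulVec,
      QMatrix_mulVec_const_of_isRegularOfDegree _ hK2]
    ring
  · simp only [Option.elim'_some, Sum.elim_inr]
    ring

theorem card_coneCycles_vertices {t : ℕ} (k : Fin t → ℕ) (q s : ℕ) :
    Fintype.card (Option ((Σ i, Fin (k i)) ⊕ ((Σ _ : Fin q, Fin 2) ⊕ Fin s))) =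
      ∑ i, k i + 2 * q + s + 1 := by
  simp only [Fintype.card_option, Fintype.card_sum, Fintype.card_sigma, Fintype.card_fin,
    sum_const, card_univ, smul_eq_mul]
  ring

theorem Qeig_one_coneCycles_of_quartic_eq_zero {t : ℕ} {k : Fin t → ℕ} (hk : ∀ i, 3 ≤ k i)
    (q s : ℕ) {θ : ℝ} (hθ5 : 5 < θ) (hθ : quartic (∑ i, k i + 2 * q + s + 1) q s θ = 0) :
    Qeig (coneCycles k q s) 1 = θ := by
  have h5 : 0 < θ - 5 := by linarith
  have h3 : 0 < θ - 3 := by linarith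
  have h1 : 0 < θ - 1 := by linarith
  refine Qeig_one_eq_of_pos_eigenvector _
    (u := Option.elim' 1 (Sum.elim (fun _ => (θ - 5)⁻¹) (Sum.elim (fun _ => (θ - 3)⁻¹)
      fun _ => (θ - 1)⁻¹))) ?_ ?_
  · rintro (_ | _ | _ | _) <;> simp [h5, h3, h1]
  · rw [QMatrix_coneCycles_mulVec hk]
    ext (_ | _ | _ | _) <;>
      simp only [Option.elim'_none, Option.elim'_some, Sum.elim_inl, Sum.elim_inr, Pi.smul_apply,
        smul_eq_mul]
    · -- the apex row is `p_{n,q,s}(θ) = 0` divided by `(θ - 5) (θ - 3) (θ - 1)`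
      unfold quartic at hθ
      field_simp
      push_cast at hθ ⊢
      linear_combination -hθ
    all_goals field_simp; ring

theorem exists_quartic_eq_zero_of_lt {n q s : ℕ} (h : 2 * q + s + 1 < n) :
    ∃ θ, 5 < θ ∧ quartic n q s θ = 0 := by
  have hR : (2 * q + s + 1 : ℝ) < n := by exact_mod_cast h
  have hcont : Continuous (quartic n q s) := by unfold quartic; fun_prop
  have h5 : quartic n q s 5 = -8 * (n - 1 - 2 * q - s) := by unfold quartic; ring
  have hbig : quartic n q s (n + 5) =
      (n + 2) * (n + 4) * (5 * n + 1) + 4 * q * (n + 4) + 4 * s * (n + 2) := by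
    unfold quartic; ring
  have hroot : (0 : ℝ) ∈ Set.Icc (quartic n q s 5) (quartic n q s (n + 5)) := by
    rw [h5, hbig]
    exact ⟨by linarith, by positivity⟩
  obtain ⟨θ, ⟨h5θ, -⟩, hθ⟩ := intermediate_value_Icc (by linarith : (5 : ℝ) ≤ n + 5)
    hcont.continuousOn hroot
  exact ⟨θ, lt_of_le_of_ne h5θ (by rintro rfl; rw [h5] at hθ; linarith), hθ⟩

theorem Qeig_one_coneCycles_eq_general
    (t z q s n : ℕ) (ht : 1 ≤ t)
    (k : Fin t → ℕ) (hk : ∀ i, 3 ≤ k i)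
    (k' : Fin z → ℕ) (hk' : ∀ j, 3 ≤ k' j)
    (hn : n = Fintype.card (Option ((Σ i, Fin (k i)) ⊕ ((Σ _ : Fin q, Fin 2) ⊕ Fin s))))
    (hn' : n = Fintype.card (Option ((Σ j, Fin (k' j)) ⊕ ((Σ _ : Fin q, Fin 2) ⊕ Fin s)))) :
    Qeig (coneCycles k q s) 1 = Qeig (coneCycles k' q s) 1 ∧
    quartic n q s (Qeig (coneCycles k q s) 1) = 0 ∧
    (∀ x : ℝ, quartic n q s x = 0 → x ≤ Qeig (coneCycles k q s) 1) := by
  rw [card_coneCycles_vertices] at hn hn'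
  have hlt : 2 * q + s + 1 < n := by
    have hk0 := hk ⟨0, ht⟩
    have hsum := single_le_sum (fun i _ => Nat.zero_le (k i)) (mem_univ ⟨0, ht⟩)
    omega
  obtain ⟨θ, hθ5, hθ⟩ := exists_quartic_eq_zero_of_lt hlt
  have hG : Qeig (coneCycles k q s) 1 = θ :=
    Qeig_one_coneCycles_of_quartic_eq_zero hk q s hθ5 (hn ▸ hθ)
  have hG' : Qeig (coneCycles k' q s) 1 = θ :=
    Qeig_one_coneCycles_of_quartic_eq_zero hk' q s hθ5 (hn' ▸ hθ)
  refine ⟨hG.trans hG'.symm, hG ▸ hθ, fun x hx => ?_⟩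
  rcases le_or_gt x 5 with hx5 | hx5
  · linarith
  · exact (Qeig_one_coneCycles_of_quartic_eq_zero hk q s hx5 (hn ▸ hx)).ge

/-- Lemma 3.5 / Corollary 3.6: two cones over unions of cycles, edges and isolated
vertices with the same order `n` and the same `q`, `s` have the same largest
`Q`-eigenvalue, namely the largest root of the quartic `p_{n,q,s}`. -/
theorem Qeig_one_coneCycles_eq
    (t z q s n : ℕ) (ht : 1 ≤ t) (hz : 1 ≤ z) (hq : 1 ≤ q) (hs : 1 ≤ s)
    (k : Fin t → ℕ) (hk : ∀ i, 3 ≤ k i)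
    (k' : Fin z → ℕ) (hk' : ∀ j, 3 ≤ k' j)
    (hn : n = Fintype.card (Option ((Σ i, Fin (k i)) ⊕ ((Σ _ : Fin q, Fin 2) ⊕ Fin s))))
    (hn' : n = Fintype.card (Option ((Σ j, Fin (k' j)) ⊕ ((Σ _ : Fin q, Fin 2) ⊕ Fin s)))) :
    Qeig (coneCycles k q s) 1 = Qeig (coneCycles k' q s) 1 ∧
    quartic n q s (Qeig (coneCycles k q s) 1) = 0 ∧
    (∀ x : ℝ, quartic n q s x = 0 → x ≤ Qeig (coneCycles k q s) 1) :=
  Qeig_one_coneCycles_eq_general t z q s n ht k hk k' hk' hn hn'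

end Paper
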